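/- arXiv:1006.0446 — 4 statements merged into one kernel-verified Lean document; each statement's English description precedes it below -/
import Mathlib

section
/- Suppose that φ: G₁ → G₂ is a nonconstant harmonic morphism of graphs, and ψ: G₂ → G₃ is a morphism of graphs such that the composition ρ := ψ ∘ φ is harmonic. Then ψ is harmonic. -/
open scoped Classical

/-- A finite connected multigraph without loop edges. -/
structure Multigraph where
  V : Type
  E : Type
  [fintypeV : Fintype V]
  [fintypeE : Fintype E]
  ends : E → Sym2 V
  loopless : ∀ e : E, ¬ (ends e).IsDiag
  connected : (SimpleGraph.fromRel fun x y : V => ∃ e : E, ends e = s(x, y)).Connected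

attribute [instance] Multigraph.fintypeV Multigraph.fintypeE

namespace Multigraph

/-- The genus (first Betti number, cyclomatic number) of a multigraph. -/
def genus (G : Multigraph) : ℤ :=
  (Fintype.card G.E : ℤ) - (Fintype.card G.V : ℤ) + 1

/-- A cycle in a multigraph, given as a nonempty set of edges such that every vertex is
incident to either 0 or 2 of its edges. -/
def IsCycleSet (G : Multigraph) (C : Set G.E) : Prop :=
  C.Nonempty ∧ ∀ x : G.V,
    Nat.card {e : G.E // e ∈ C ∧ x ∈ G.ends e} = 0 ∨
    Nat.card {e : G.E // e ∈ C ∧ x ∈ G.ends e} = 2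

end Multigraph

/-- A morphism of multigraphs: vertices go to vertices, and each edge goes either to an
edge joining the images of its endpoints, or to the common image of its endpoints
(in which case the edge is *vertical*). -/
structure Morphism (G G' : Multigraph) where
  vmap : G.V → G'.V
  emap : G.E → G'.E ⊕ G'.V
  compat : ∀ e : G.E,
    (∀ e', emap e = Sum.inl e' → G'.ends e' = (G.ends e).map vmap) ∧
    (∀ v, emap e = Sum.inr v → (G.ends e).map vmap = Sym2.diag v)

namespace Morphism

/-- A morphism is harmonic if for every vertex `x`, the number of edges incident to `x`
mapping to a given edge `e'` incident to `φ(x)` is independent of the choice of `e'`. -/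
def Harmonic {G G' : Multigraph} (φ : Morphism G G') : Prop :=
  ∀ (x : G.V) (e₁ e₂ : G'.E), φ.vmap x ∈ G'.ends e₁ → φ.vmap x ∈ G'.ends e₂ →
    Nat.card {e : G.E // x ∈ G.ends e ∧ φ.emap e = Sum.inl e₁} =
    Nat.card {e : G.E // x ∈ G.ends e ∧ φ.emap e = Sum.inl e₂}

/-- A morphism is nonconstant if its image is not a single vertex. -/
def Nonconstant {G G' : Multigraph} (φ : Morphism G G') : Prop :=
  ∃ x y : G.V, φ.vmap x ≠ φ.vmap y

/-- Composition of morphisms of multigraphs. -/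
def comp {G₁ G₂ G₃ : Multigraph} (ψ : Morphism G₂ G₃) (φ : Morphism G₁ G₂) :
    Morphism G₁ G₃ where
  vmap := ψ.vmap ∘ φ.vmap
  emap e := Sum.elim ψ.emap (fun v => Sum.inr (ψ.vmap v)) (φ.emap e)
  compat e := by
    constructor
    · intro e'' h
      rcases hφ : φ.emap e with e' | v
      · simp only [hφ, Sum.elim_inl] at h
        have h1 := (φ.compat e).1 e' hφ
        have h2 := (ψ.compat e').1 e'' h
        rw [h2, h1, Sym2.map_map]
      · simp only [hφ, Sum.elim_inr] at h
        simp at h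
    · intro v h
      rcases hφ : φ.emap e with e' | v₀
      · simp only [hφ, Sum.elim_inl] at h
        have h1 := (φ.compat e).1 e' hφ
        have h2 := (ψ.compat e').2 v h
        rw [← Sym2.map_map, ← h1]
        exact h2
      · simp only [hφ, Sum.elim_inr, Sum.inr.injEq] at h
        have h1 := (φ.compat e).2 v₀ hφ
        subst h
        rw [← Sym2.map_map, h1]
        rfl
end Morphism

/-- A group of automorphisms of a multigraph `G` (a faithful action of `Γ` on `G` by
automorphisms, i.e. a subgroup of `Aut(G)`). -/
structure GraphAction (Γ : Type) [Group Γ] (G : Multigraph) where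
  actV : Γ →* Equiv.Perm G.V
  actE : Γ →* Equiv.Perm G.E
  ends_map : ∀ (γ : Γ) (e : G.E), G.ends (actE γ e) = (G.ends e).map (actV γ)
  faithful : ∀ γ : Γ, (∀ x : G.V, actV γ x = x) → (∀ e : G.E, actE γ e = e) → γ = 1

namespace GraphAction

variable {Γ : Type} [Group Γ] {G : Multigraph}

/-- Two vertices lie in the same `Δ`-orbit. -/
def vrel (A : GraphAction Γ G) (Δ : Subgroup Γ) (x y : G.V) : Prop :=
  ∃ δ ∈ Δ, A.actV δ x = y

/-- Two edges lie in the same `Δ`-orbit. -/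
def erel (A : GraphAction Γ G) (Δ : Subgroup Γ) (e f : G.E) : Prop :=
  ∃ δ ∈ Δ, A.actE δ e = f

/-- The setoid of `Δ`-orbits of vertices. -/
def vSetoid (A : GraphAction Γ G) (Δ : Subgroup Γ) : Setoid G.V where
  r := A.vrel Δ
  iseqv := by
    constructor
    · intro x; exact ⟨1, Δ.one_mem, by simp⟩
    · rintro x y ⟨δ, hδ, h⟩
      refine ⟨δ⁻¹, Δ.inv_mem hδ, ?_⟩
      rw [map_inv, ← h]
      exact Equiv.symm_apply_apply _ _
    · rintro x y z ⟨δ₁, h1, e1⟩ ⟨δ₂, h2, e2⟩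
      refine ⟨δ₂ * δ₁, Δ.mul_mem h2 h1, ?_⟩
      rw [map_mul]
      simp [Equiv.Perm.mul_apply, e1, e2]

/-- The setoid of `Δ`-orbits of edges. -/
def eSetoid (A : GraphAction Γ G) (Δ : Subgroup Γ) : Setoid G.E where
  r := A.erel Δ
  iseqv := by
    constructor
    · intro e; exact ⟨1, Δ.one_mem, by simp⟩
    · rintro e f ⟨δ, hδ, h⟩
      refine ⟨δ⁻¹, Δ.inv_mem hδ, ?_⟩
      rw [map_inv, ← h]
      exact Equiv.symm_apply_apply _ _
    · rintro e f k ⟨δ₁, h1, e1⟩ ⟨δ₂, h2, e2⟩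
      refine ⟨δ₂ * δ₁, Δ.mul_mem h2 h1, ?_⟩
      rw [map_mul]
      simp [Equiv.Perm.mul_apply, e1, e2]

/-- An edge is `Δ`-vertical if its two endpoints lie in the same `Δ`-orbit (so it is
contracted by the quotient morphism `G → G/Δ`). -/
def Vertical (A : GraphAction Γ G) (Δ : Subgroup Γ) (e : G.E) : Prop :=
  ∃ x y : G.V, G.ends e = s(x, y) ∧ A.vrel Δ x y

/-- The vertex set of the quotient graph `G/Δ`: the `Δ`-orbits of vertices. -/
abbrev quotV (A : GraphAction Γ G) (Δ : Subgroup Γ) : Type :=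
  Quotient (A.vSetoid Δ)

/-- The edge set of the quotient graph `G/Δ`: the `Δ`-orbits of non-vertical edges. -/
abbrev quotE (A : GraphAction Γ G) (Δ : Subgroup Γ) : Type :=
  Quotient ((A.eSetoid Δ).comap (Subtype.val : {e : G.E // ¬ A.Vertical Δ e} → G.E))

/-- The genus of the quotient graph `G/Δ`. -/
noncomputable def quotGenus (A : GraphAction Γ G) (Δ : Subgroup Γ) : ℤ :=
  (Nat.card (A.quotE Δ) : ℤ) - (Nat.card (A.quotV Δ) : ℤ) + 1

/-- The order of the stabilizer `Δ_x` of a vertex `x`. -/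
noncomputable def stabOrder (A : GraphAction Γ G) (Δ : Subgroup Γ) (x : G.V) : ℕ :=
  Nat.card {γ : Γ // γ ∈ Δ ∧ A.actV γ x = x}

/-- The vertical multiplicity of a vertex `x`: the number of `Δ`-vertical edges
incident to `x`. -/
noncomputable def vertMult (A : GraphAction Γ G) (Δ : Subgroup Γ) (x : G.V) : ℕ :=
  Nat.card {e : G.E // x ∈ G.ends e ∧ A.Vertical Δ e}

/-- `r_y = |Δ_x|` for a vertex `y` of the quotient `G/Δ` and any `x` in the fiber over `y`. -/
noncomputable def r (A : GraphAction Γ G) (Δ : Subgroup Γ) (y : A.quotV Δ) : ℕ :=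
  A.stabOrder Δ (Quotient.out y)

/-- `w_y = v(x)/|Δ_x|` for a vertex `y` of the quotient `G/Δ` and any `x` in the fiber. -/
noncomputable def w (A : GraphAction Γ G) (Δ : Subgroup Γ) (y : A.quotV Δ) : ℕ :=
  A.vertMult Δ (Quotient.out y) / A.r Δ y

/-- The ramification number `R = Σ_y [2(1 - 1/r_y) + w_y]` of the quotient map `G → G/Δ`. -/
noncomputable def ram (A : GraphAction Γ G) (Δ : Subgroup Γ) : ℚ :=
  ∑ᶠ y : A.quotV Δ, (2 * (1 - 1 / (A.r Δ y : ℚ)) + (A.w Δ y : ℚ))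

/-- A vertex `y` of the quotient `G/Δ` is a branch point if `2(1 - 1/r_y) + w_y > 0`. -/
def IsBranch (A : GraphAction Γ G) (Δ : Subgroup Γ) (y : A.quotV Δ) : Prop :=
  0 < 2 * (1 - 1 / (A.r Δ y : ℚ)) + (A.w Δ y : ℚ)

/-- The quotient morphism `φ_Δ : G → G/Δ` is harmonic: for every vertex `x` of `G` and
every pair of quotient edges incident to the image of `x`, the numbers of preimages
incident to `x` agree. -/
def QuotHarmonic (A : GraphAction Γ G) (Δ : Subgroup Γ) : Prop :=
  ∀ (x : G.V) (e₁ e₂ : G.E), ¬ A.Vertical Δ e₁ → ¬ A.Vertical Δ e₂ →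
    (∃ v ∈ G.ends e₁, A.vrel Δ x v) → (∃ v ∈ G.ends e₂, A.vrel Δ x v) →
    Nat.card {e : G.E // x ∈ G.ends e ∧ A.erel Δ e e₁} =
    Nat.card {e : G.E // x ∈ G.ends e ∧ A.erel Δ e e₂}

/-- The quotient morphism `φ_Δ : G → G/Δ` is non-degenerate: no neighborhood `x(1)` is
contracted to a vertex, i.e. every vertex has a neighbor outside its `Δ`-orbit. -/
def QuotNondeg (A : GraphAction Γ G) (Δ : Subgroup Γ) : Prop :=
  ∀ x : G.V, ∃ e : G.E, x ∈ G.ends e ∧ ∃ y ∈ G.ends e, ¬ A.vrel Δ x y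

/-- `Γ` acts harmonically on `G` if for every subgroup `Δ ≤ Γ` the quotient morphism
`φ_Δ : G → G/Δ` is harmonic and non-degenerate. -/
def ActsHarmonically (A : GraphAction Γ G) : Prop :=
  ∀ Δ : Subgroup Γ, A.QuotHarmonic Δ ∧ A.QuotNondeg Δ

/-- The quotient map `G → G/Δ` is horizontally unramified: all vertex stabilizers in `Δ`
are trivial. -/
def HorizUnramified (A : GraphAction Γ G) (Δ : Subgroup Γ) : Prop :=
  ∀ (x : G.V) (γ : Γ), γ ∈ Δ → A.actV γ x = x → γ = 1

end GraphAction

/-- `M g` is the maximal order of a group acting harmonically on a graph of genus `g`. -/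
noncomputable def M (g : ℕ) : ℕ :=
  sSup {n : ℕ | ∃ (Γ : Type) (i : Group Γ) (G : Multigraph) (A : @GraphAction Γ i G),
    @GraphAction.ActsHarmonically Γ i G A ∧ G.genus = (g : ℤ) ∧ Nat.card Γ = n}

/-!
Write `m_φ(x)` for the number of edges at `x` over any edge at `φ(x)`. Since `φ` is harmonic and
nonconstant, every vertex `y` of `G₂` has a preimage `x` with `m_φ(x) > 0`: such vertices exist
because `G₁` is connected, and their images spread along the edges of the connected graph `G₂`.
Grouping the edges at `x` over `e₃` by their image in `G₂` shows that the local count of `ψ ∘ φ`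
at `x` over `e₃` is `m_φ(x)` times the local count of `ψ` at `y` over `e₃`; cancelling `m_φ(x)`
turns harmonicity of `ψ ∘ φ` at `x` into harmonicity of `ψ` at `y`.
-/

namespace Multigraph

theorem induction_on_edges (G : Multigraph) {P : G.V → Prop}
    (step : ∀ (e : G.E) (x y : G.V), G.ends e = s(x, y) → P x → P y)
    {a : G.V} (ha : P a) (b : G.V) : P b := by
  obtain ⟨p⟩ := G.connected.preconnected a b
  induction p with
  | nil => exact ha
  | cons hadj _ ih =>
    refine ih ?_
    rw [SimpleGraph.fromRel_adj] at hadj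
    obtain ⟨-, ⟨e, he⟩ | ⟨e, he⟩⟩ := hadj
    · exact step e _ _ he ha
    · exact step e _ _ (he.trans Sym2.eq_swap) ha

end Multigraph

namespace Morphism

open Finset

variable {G₁ G₂ G₃ : Multigraph}

noncomputable def fiberAt (φ : Morphism G₁ G₂) (x : G₁.V) (e' : G₂.E) : Finset G₁.E :=
  univ.filter fun e => x ∈ G₁.ends e ∧ φ.emap e = Sum.inl e'

@[simp]
theorem mem_fiberAt {φ : Morphism G₁ G₂} {x : G₁.V} {e' : G₂.E} {e : G₁.E} :
    e ∈ φ.fiberAt x e' ↔ x ∈ G₁.ends e ∧ φ.emap e = Sum.inl e' := by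
  simp [fiberAt]

theorem card_subtype_eq_card_fiberAt (φ : Morphism G₁ G₂) (x : G₁.V) (e' : G₂.E) :
    Nat.card {e : G₁.E // x ∈ G₁.ends e ∧ φ.emap e = Sum.inl e'} = (φ.fiberAt x e').card := by
  rw [Nat.card_eq_fintype_card, Fintype.card_subtype, fiberAt]

def HorizontalAt (φ : Morphism G₁ G₂) (x : G₁.V) : Prop :=
  ∃ e', (φ.fiberAt x e').Nonempty

theorem vmap_mem_ends (φ : Morphism G₁ G₂) {e : G₁.E} {e' : G₂.E} {x : G₁.V}
    (he : φ.emap e = Sum.inl e') (hx : x ∈ G₁.ends e) : φ.vmap x ∈ G₂.ends e' := by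
  rw [(φ.compat e).1 e' he]
  exact Sym2.mem_map.mpr ⟨x, hx, rfl⟩

theorem vmap_mem_ends_of_mem_fiberAt (φ : Morphism G₁ G₂) {x : G₁.V} {e' : G₂.E} {e : G₁.E}
    (he : e ∈ φ.fiberAt x e') : φ.vmap x ∈ G₂.ends e' :=
  φ.vmap_mem_ends (mem_fiberAt.mp he).2 (mem_fiberAt.mp he).1

theorem vmap_eq_of_emap_eq_inr (φ : Morphism G₁ G₂) {e : G₁.E} {v : G₂.V} {x y : G₁.V}
    (he : φ.emap e = Sum.inr v) (hxy : G₁.ends e = s(x, y)) : φ.vmap x = φ.vmap y := by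
  have h := (φ.compat e).2 v he
  rw [hxy, Sym2.map_mk, Sym2.diag, Sym2.eq_iff] at h
  rcases h with ⟨hx, hy⟩ | ⟨hx, hy⟩ <;> rw [hx, hy]

theorem Nonconstant.exists_horizontalAt {φ : Morphism G₁ G₂} (hφ : φ.Nonconstant) :
    ∃ x, φ.HorizontalAt x := by
  by_contra! hvert
  obtain ⟨a, b, hab⟩ := hφ
  refine hab (G₁.induction_on_edges (P := fun y => φ.vmap a = φ.vmap y) ?_ rfl b)
  intro e x y hxy hx
  rcases he : φ.emap e with e' | v
  · exact absurd ⟨e', e, mem_fiberAt.mpr ⟨hxy ▸ Sym2.mem_mk_left x y, he⟩⟩ (hvert x)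
  · exact hx.trans (φ.vmap_eq_of_emap_eq_inr he hxy)

theorem comp_emap_eq_inl_iff (ψ : Morphism G₂ G₃) (φ : Morphism G₁ G₂) (e : G₁.E)
    (e₃ : G₃.E) :
    (ψ.comp φ).emap e = Sum.inl e₃ ↔ ∃ e₂, φ.emap e = Sum.inl e₂ ∧ ψ.emap e₂ = Sum.inl e₃ := by
  rcases h : φ.emap e with e₂ | v <;> simp [comp, h]

theorem card_comp_fiberAt (ψ : Morphism G₂ G₃) (φ : Morphism G₁ G₂) (x : G₁.V)
    (e₃ : G₃.E) :
    ((ψ.comp φ).fiberAt x e₃).card =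
      ∑ e₂ ∈ ψ.fiberAt (φ.vmap x) e₃, (φ.fiberAt x e₂).card := by
  have hunion : (ψ.comp φ).fiberAt x e₃ = (ψ.fiberAt (φ.vmap x) e₃).biUnion (φ.fiberAt x) := by
    ext e
    simp only [mem_fiberAt, mem_biUnion, comp_emap_eq_inl_iff]
    constructor
    · rintro ⟨hx, e₂, h₁, h₂⟩
      exact ⟨e₂, ⟨φ.vmap_mem_ends h₁ hx, h₂⟩, hx, h₁⟩
    · rintro ⟨e₂, ⟨-, h₂⟩, hx, h₁⟩
      exact ⟨hx, e₂, h₁, h₂⟩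
  rw [hunion, card_biUnion]
  intro e₂ _ f₂ _ hne
  refine disjoint_left.mpr fun e he hf => hne ?_
  exact Sum.inl_injective ((mem_fiberAt.mp he).2.symm.trans (mem_fiberAt.mp hf).2)

namespace Harmonic

variable {φ : Morphism G₁ G₂} (hφ : φ.Harmonic)
include hφ

theorem card_fiberAt_eq {x : G₁.V} {e₁ e₂ : G₂.E} (h₁ : φ.vmap x ∈ G₂.ends e₁)
    (h₂ : φ.vmap x ∈ G₂.ends e₂) : (φ.fiberAt x e₁).card = (φ.fiberAt x e₂).card := by
  simpa only [card_subtype_eq_card_fiberAt] using hφ x e₁ e₂ h₁ h₂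

theorem fiberAt_nonempty {x : G₁.V} (hx : φ.HorizontalAt x) {e' : G₂.E}
    (he' : φ.vmap x ∈ G₂.ends e') : (φ.fiberAt x e').Nonempty := by
  obtain ⟨e₀, he₀⟩ := hx
  rw [← card_pos, hφ.card_fiberAt_eq he' (φ.vmap_mem_ends_of_mem_fiberAt he₀.choose_spec)]
  exact he₀.card_pos

theorem exists_horizontalAt_preimage (hnc : φ.Nonconstant) (y : G₂.V) :
    ∃ x, φ.vmap x = y ∧ φ.HorizontalAt x := by
  obtain ⟨x₀, hx₀⟩ := hnc.exists_horizontalAt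
  refine G₂.induction_on_edges (P := fun y => ∃ x, φ.vmap x = y ∧ φ.HorizontalAt x) ?_
    ⟨x₀, rfl, hx₀⟩ y
  rintro e' y y' hyy' ⟨x, rfl, hx⟩
  obtain ⟨e, he⟩ := hφ.fiberAt_nonempty hx (hyy' ▸ Sym2.mem_mk_left _ _)
  rw [mem_fiberAt] at he
  have hy' : y' ∈ (G₁.ends e).map φ.vmap := (φ.compat e).1 e' he.2 ▸ hyy' ▸ Sym2.mem_mk_right _ _
  obtain ⟨z, hz, rfl⟩ := Sym2.mem_map.mp hy'
  exact ⟨z, rfl, e', e, mem_fiberAt.mpr ⟨hz, he.2⟩⟩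

theorem card_comp_fiberAt_eq_mul (ψ : Morphism G₂ G₃) {x : G₁.V} {e₀ : G₂.E}
    (he₀ : φ.vmap x ∈ G₂.ends e₀) (e₃ : G₃.E) :
    ((ψ.comp φ).fiberAt x e₃).card = (ψ.fiberAt (φ.vmap x) e₃).card * (φ.fiberAt x e₀).card := by
  rw [card_comp_fiberAt, ← smul_eq_mul, ← sum_const]
  exact sum_congr rfl fun e₂ he₂ => hφ.card_fiberAt_eq (mem_fiberAt.mp he₂).1 he₀

end Harmonic

end Morphism

/-- If `φ : G₁ → G₂` is a nonconstant harmonic morphism and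
`ψ : G₂ → G₃` is a morphism such that `ρ := ψ ∘ φ` is harmonic, then `ψ` is harmonic. -/
theorem harmonic_of_comp_harmonic {G₁ G₂ G₃ : Multigraph}
    (φ : Morphism G₁ G₂) (ψ : Morphism G₂ G₃)
    (hφ : φ.Harmonic) (hφnc : φ.Nonconstant) (hρ : (ψ.comp φ).Harmonic) :
    ψ.Harmonic := by
  intro y e₁ e₂ h₁ h₂
  obtain ⟨x, rfl, e₀, he₀⟩ := hφ.exists_horizontalAt_preimage hφnc y
  have hx₀ := φ.vmap_mem_ends_of_mem_fiberAt he₀.choose_spec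
  have hρx := hρ x e₁ e₂ h₁ h₂
  simp only [Morphism.card_subtype_eq_card_fiberAt, hφ.card_comp_fiberAt_eq_mul ψ hx₀] at hρx ⊢
  exact Nat.eq_of_mul_eq_mul_right he₀.card_pos hρx
end

section
/- Let Γ be a group of automorphisms of a graph G. Then Γ acts harmonically on G if and only if for every vertex x of G, the stabilizer subgroup Γ_x acts freely on the set E(x(1)) of edges incident to x, and the vertex set V(x(1)) is not contained in the orbit Γx. -/
open scoped Classical

/-!
Suppose `Γ` acts harmonically and `γ` fixes a vertex `x` and an edge at `x`. Harmonicity of the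
quotient by the cyclic group `⟨γ⟩`, which fixes `x` so that no edge at `x` is vertical, says
that all `⟨γ⟩`-orbits of edges meet the star of `x` equally often; the orbit of the fixed edge
meets it once, so `γ` fixes every edge at `x` and hence every neighbour of `x`. Propagating
along the connected graph, `γ` acts trivially, so `γ = 1` by faithfulness.

Conversely, if every `Γ_x` acts freely on the star of `x`, then for any `Δ ≤ Γ` the edges at `x`
in the `Δ`-orbit of a non-vertical edge `e₀` at `x` are exactly the images of `e₀` under `Δ_x`,
so there are `|Δ_x|` of them, whatever `e₀` is.

Non-degeneracy for every `Δ` amounts to non-degeneracy for `Δ = Γ`.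
-/

namespace Multigraph

variable (G : Multigraph)

theorem ne_of_ends_eq {e : G.E} {v w : G.V} (h : G.ends e = s(v, w)) : v ≠ w := by
  rintro rfl
  exact G.loopless e (h ▸ Sym2.mk_isDiag_iff.mpr rfl)

theorem forall_of_ends_eq {P : G.V → Prop} (h : ∀ e v w, G.ends e = s(v, w) → P v → P w)
    {x : G.V} (hx : P x) (v : G.V) : P v := by
  obtain ⟨walk⟩ := G.connected.preconnected x v
  induction walk with
  | nil => exact hx
  | cons hadj _ ih =>
    obtain ⟨-, ⟨e, he⟩ | ⟨e, he⟩⟩ := SimpleGraph.fromRel_adj _ _ _ |>.mp hadj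
    · exact ih (h e _ _ he hx)
    · exact ih (h e _ _ (he.trans Sym2.eq_swap) hx)

end Multigraph

theorem MonoidHom.apply_eq_self_of_mem_zpowers {Γ α : Type*} [Group Γ] (ρ : Γ →* Equiv.Perm α)
    {γ δ : Γ} {a : α} (ha : ρ γ a = a) (hδ : δ ∈ Subgroup.zpowers γ) : ρ δ a = a := by
  obtain ⟨k, rfl⟩ := hδ
  rw [map_zpow]
  exact Equiv.Perm.zpow_apply_eq_self_of_apply_eq_self ha k

namespace GraphAction

variable {Γ : Type} [Group Γ] {G : Multigraph} (A : GraphAction Γ G)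

def StabilizerFreeOnStar (x : G.V) : Prop :=
  ∀ (γ : Γ) (e : G.E), A.actV γ x = x → x ∈ G.ends e → A.actE γ e = e → γ = 1

variable {A} {Δ : Subgroup Γ}

theorem vrel_of_mem {δ : Γ} (hδ : δ ∈ Δ) (x : G.V) : A.vrel Δ x (A.actV δ x) :=
  ⟨δ, hδ, rfl⟩

theorem vrel_refl (x : G.V) : A.vrel Δ x x :=
  (A.vSetoid Δ).iseqv.refl x

theorem vrel_symm {x y : G.V} (h : A.vrel Δ x y) : A.vrel Δ y x :=
  (A.vSetoid Δ).iseqv.symm h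

theorem vrel_trans {x y z : G.V} (hxy : A.vrel Δ x y) (hyz : A.vrel Δ y z) : A.vrel Δ x z :=
  (A.vSetoid Δ).iseqv.trans hxy hyz

theorem erel_refl (e : G.E) : A.erel Δ e e :=
  (A.eSetoid Δ).iseqv.refl e

theorem erel_symm {e f : G.E} (h : A.erel Δ e f) : A.erel Δ f e :=
  (A.eSetoid Δ).iseqv.symm h

theorem erel_trans {e f g : G.E} (hef : A.erel Δ e f) (hfg : A.erel Δ f g) : A.erel Δ e g :=
  (A.eSetoid Δ).iseqv.trans hef hfg

theorem mem_ends_actE {γ : Γ} {e : G.E} {v : G.V} (h : v ∈ G.ends e) :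
    A.actV γ v ∈ G.ends (A.actE γ e) := by
  rw [A.ends_map]
  exact Sym2.mem_map.mpr ⟨v, h, rfl⟩

theorem mem_ends_actE_iff {γ : Γ} {e : G.E} {v : G.V} :
    v ∈ G.ends (A.actE γ e) ↔ A.actV γ⁻¹ v ∈ G.ends e := by
  refine ⟨fun h => ?_, fun h => ?_⟩
  · simpa using A.mem_ends_actE (γ := γ⁻¹) h
  · simpa using A.mem_ends_actE (γ := γ) h

theorem actV_eq_self_of_actE_eq_self {γ : Γ} {e : G.E} {v w : G.V} (hends : G.ends e = s(v, w))
    (hv : A.actV γ v = v) (he : A.actE γ e = e) : A.actV γ w = w := by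
  have h := A.ends_map γ e
  rw [he, hends, Sym2.map_mk, hv] at h
  rcases Sym2.eq_iff.mp h with ⟨-, hw⟩ | ⟨-, hwv⟩
  · exact hw.symm
  · exact absurd hwv.symm (G.ne_of_ends_eq hends)

theorem vertical_iff {e : G.E} {x : G.V} (hx : x ∈ G.ends e) :
    A.Vertical Δ e ↔ ∃ y ∈ G.ends e, y ≠ x ∧ A.vrel Δ x y := by
  constructor
  · rintro ⟨a, b, hab, hrel⟩
    have hne := G.ne_of_ends_eq hab
    rw [hab] at hx ⊢
    rcases Sym2.mem_iff.mp hx with rfl | rfl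
    · exact ⟨b, Sym2.mem_mk_right _ _, hne.symm, hrel⟩
    · exact ⟨a, Sym2.mem_mk_left _ _, hne, vrel_symm hrel⟩
  · rintro ⟨y, hy, hne, hrel⟩
    exact ⟨x, y, ((Sym2.mem_and_mem_iff hne.symm).mp ⟨hx, hy⟩), hrel⟩

theorem not_vertical_of_forall_actV_eq_self {e : G.E} {x : G.V} (hx : x ∈ G.ends e)
    (hfix : ∀ δ ∈ Δ, A.actV δ x = x) : ¬ A.Vertical Δ e := by
  rw [vertical_iff hx]
  rintro ⟨-, -, hne, δ, hδ, rfl⟩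
  exact hne (hfix δ hδ)

theorem Vertical.of_erel {e f : G.E} (he : A.Vertical Δ e) (hef : A.erel Δ e f) :
    A.Vertical Δ f := by
  obtain ⟨δ, hδ, rfl⟩ := hef
  have hx := Sym2.out_fst_mem (G.ends e)
  obtain ⟨y, hy, hne, hxy⟩ := (vertical_iff hx).mp he
  refine (vertical_iff (A.mem_ends_actE hx)).mpr
    ⟨A.actV δ y, A.mem_ends_actE hy, (A.actV δ).injective.ne hne, ?_⟩
  exact vrel_trans (vrel_trans (vrel_symm (vrel_of_mem hδ _)) hxy) (vrel_of_mem hδ _)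

theorem exists_mem_ends_erel {x : G.V} {e : G.E} (h : ∃ v ∈ G.ends e, A.vrel Δ x v) :
    ∃ e₀, x ∈ G.ends e₀ ∧ A.erel Δ e₀ e := by
  obtain ⟨v, hv, δ, hδ, rfl⟩ := h
  exact ⟨A.actE δ⁻¹ e, mem_ends_actE_iff.mpr (by simpa using hv), δ, hδ, by simp⟩

theorem card_star_erel_eq_stabOrder {x : G.V} (hfree : A.StabilizerFreeOnStar x) {e₀ : G.E}
    (hx : x ∈ G.ends e₀) (hnv : ¬ A.Vertical Δ e₀) :
    Nat.card {e : G.E // x ∈ G.ends e ∧ A.erel Δ e e₀} = A.stabOrder Δ x := by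
  refine (Nat.card_eq_of_bijective (fun γ : {γ : Γ // γ ∈ Δ ∧ A.actV γ x = x} =>
    ⟨A.actE γ e₀, by simpa only [γ.2.2] using A.mem_ends_actE (γ := γ.1) hx,
      γ⁻¹, Δ.inv_mem γ.2.1, by simp⟩) ⟨?_, ?_⟩).symm
  · rintro ⟨γ, _, hγx⟩ ⟨γ', _, hγ'x⟩ hγγ'
    have h' : A.actE γ e₀ = A.actE γ' e₀ := congrArg Subtype.val hγγ'
    have := hfree (γ'⁻¹ * γ) e₀ (by simp [hγx, Equiv.symm_apply_eq, hγ'x]) hx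
      (by simp [h'])
    exact Subtype.ext (inv_mul_eq_one.mp this).symm
  · rintro ⟨f, hxf, δ, hδ, rfl⟩
    have hmem : A.actV δ x ∈ G.ends (A.actE δ f) := A.mem_ends_actE hxf
    have hδx : A.actV δ x = x := by
      by_contra hne
      exact hnv ((vertical_iff hx).mpr ⟨_, hmem, hne, vrel_of_mem hδ x⟩)
    exact ⟨⟨δ⁻¹, Δ.inv_mem hδ, by rw [map_inv, Equiv.Perm.inv_eq_iff_eq, hδx]⟩, by simp⟩

theorem card_star_erel_eq_stabOrder_of_exists_vrel {x : G.V} (hfree : A.StabilizerFreeOnStar x)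
    {e : G.E} (hnv : ¬ A.Vertical Δ e) (h : ∃ v ∈ G.ends e, A.vrel Δ x v) :
    Nat.card {f : G.E // x ∈ G.ends f ∧ A.erel Δ f e} = A.stabOrder Δ x := by
  obtain ⟨e₀, hx, he₀⟩ := exists_mem_ends_erel h
  rw [← card_star_erel_eq_stabOrder hfree hx fun hv => hnv (hv.of_erel he₀)]
  exact Nat.card_congr <| Equiv.subtypeEquivRight fun f => and_congr_right fun _ =>
    ⟨fun hf => erel_trans hf (erel_symm he₀), fun hf => erel_trans hf he₀⟩

theorem quotHarmonic_of_forall_stabilizerFreeOnStar (hfree : ∀ x, A.StabilizerFreeOnStar x)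
    (Δ : Subgroup Γ) : A.QuotHarmonic Δ := by
  intro x e₁ e₂ hnv₁ hnv₂ h₁ h₂
  rw [card_star_erel_eq_stabOrder_of_exists_vrel (hfree x) hnv₁ h₁,
    card_star_erel_eq_stabOrder_of_exists_vrel (hfree x) hnv₂ h₂]

theorem actE_eq_self_of_quotHarmonic_zpowers {γ : Γ} (H : A.QuotHarmonic (Subgroup.zpowers γ))
    {x : G.V} {f g : G.E} (hx : A.actV γ x = x) (hxf : x ∈ G.ends f) (hf : A.actE γ f = f)
    (hxg : x ∈ G.ends g) : A.actE γ g = g := by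
  have hnv : ∀ e, x ∈ G.ends e → ¬ A.Vertical (Subgroup.zpowers γ) e := fun e hxe =>
    not_vertical_of_forall_actV_eq_self hxe fun δ => A.actV.apply_eq_self_of_mem_zpowers hx
  have hf_orbit : ∀ e : {e : G.E // x ∈ G.ends e ∧ A.erel (Subgroup.zpowers γ) e f}, e.1 = f := by
    rintro ⟨e, -, δ, hδ, hδe⟩
    exact (A.actE δ).injective (hδe.trans (A.actE.apply_eq_self_of_mem_zpowers hf hδ).symm)
  have hf_card : Nat.card {e : G.E // x ∈ G.ends e ∧ A.erel (Subgroup.zpowers γ) e f} = 1 :=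
    Nat.card_eq_one_iff_unique.mpr
      ⟨⟨fun e e' => Subtype.ext ((hf_orbit e).trans (hf_orbit e').symm)⟩,
        ⟨⟨f, hxf, erel_refl f⟩⟩⟩
  have hg_sub : Subsingleton {e : G.E // x ∈ G.ends e ∧ A.erel (Subgroup.zpowers γ) e g} := by
    refine (Nat.card_eq_one_iff_unique.mp ?_).1
    rw [← H x f g (hnv f hxf) (hnv g hxg) ⟨x, hxf, vrel_refl x⟩ ⟨x, hxg, vrel_refl x⟩, hf_card]
  have hγg : x ∈ G.ends (A.actE γ g) := by simpa only [hx] using A.mem_ends_actE (γ := γ) hxg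
  have hγg_orbit : A.erel (Subgroup.zpowers γ) (A.actE γ g) g :=
    ⟨γ⁻¹, inv_mem (Subgroup.mem_zpowers γ), by simp⟩
  exact congrArg Subtype.val (hg_sub.elim ⟨_, hγg, hγg_orbit⟩ ⟨g, hxg, erel_refl g⟩)

theorem eq_one_of_quotHarmonic_zpowers {γ : Γ} (H : A.QuotHarmonic (Subgroup.zpowers γ))
    {x : G.V} {e : G.E} (hx : A.actV γ x = x) (hxe : x ∈ G.ends e) (he : A.actE γ e = e) :
    γ = 1 := by
  have hfix : ∀ v, A.actV γ v = v ∧ ∀ g, v ∈ G.ends g → A.actE γ g = g := by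
    refine G.forall_of_ends_eq (fun f v w hf ⟨hv, hvf⟩ => ?_)
      ⟨hx, fun g => actE_eq_self_of_quotHarmonic_zpowers H hx hxe he⟩
    have hfγ : A.actE γ f = f := hvf f (hf ▸ Sym2.mem_mk_left v w)
    have hw := actV_eq_self_of_actE_eq_self hf hv hfγ
    exact ⟨hw, fun g => actE_eq_self_of_quotHarmonic_zpowers H hw (hf ▸ Sym2.mem_mk_right v w) hfγ⟩
  exact A.faithful γ (fun v => (hfix v).1) fun g => (hfix _).2 g (Sym2.out_fst_mem _)

theorem QuotNondeg.mono {Δ' : Subgroup Γ} (h : A.QuotNondeg Δ') (hΔ : Δ ≤ Δ') :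
    A.QuotNondeg Δ := fun x =>
  let ⟨e, hxe, y, hy, hxy⟩ := h x
  ⟨e, hxe, y, hy, fun ⟨δ, hδ, hδx⟩ => hxy ⟨δ, hΔ hδ, hδx⟩⟩

theorem quotNondeg_top_iff : A.QuotNondeg ⊤ ↔
    ∀ x : G.V, ∃ e : G.E, x ∈ G.ends e ∧ ∃ y ∈ G.ends e, ¬ ∃ γ : Γ, A.actV γ x = y := by
  simp [QuotNondeg, vrel]

end GraphAction

/-- `Γ` acts harmonically on `G` iff for every vertex `x`, the stabilizer
`Γ_x` acts freely on the edges incident to `x`, and the vertex set of `x(1)` is not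
contained in the orbit `Γx`. -/
theorem actsHarmonically_iff {Γ : Type} [Group Γ] {G : Multigraph} (A : GraphAction Γ G) :
    A.ActsHarmonically ↔
      ∀ x : G.V,
        (∀ (γ : Γ) (e : G.E), A.actV γ x = x → x ∈ G.ends e → A.actE γ e = e → γ = 1) ∧
        (∃ e : G.E, x ∈ G.ends e ∧ ∃ y ∈ G.ends e, ¬ ∃ γ : Γ, A.actV γ x = y) := by
  refine ⟨fun H x => ⟨fun γ e hx hxe he => ?_, GraphAction.quotNondeg_top_iff.mp (H ⊤).2 x⟩,
    fun H Δ => ?_⟩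
  · exact GraphAction.eq_one_of_quotHarmonic_zpowers (H _).1 hx hxe he
  · exact ⟨GraphAction.quotHarmonic_of_forall_stabilizerFreeOnStar (fun x => (H x).1) Δ,
      (GraphAction.quotNondeg_top_iff.mpr fun x => (H x).2).mono le_top⟩
end

section
/- Suppose a group Γ acts harmonically on a graph G with ramification number R satisfying 0 < R < 2. Then there is exactly one branch point y in G/Γ, and either r_y ≥ 2 and w_y = 0, or r_y = w_y = 1. -/
open scoped Classical

/-!
Every term `2(1 - 1/r) + w` of the ramification number is nonnegative, and once positive it is
at least `1` (for `r ≥ 2` it is at least `1 + w`, for `r = 1` it equals `w`). So `R < 2` leaves room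
for at most one positive term, `R > 0` forces one, and a term below `2` must have `w = 0` if
`r ≥ 2`, or `w = 1` if `r = 1`.
-/

/-- The term of a vertex `y` of `G/Γ` in the ramification number, as a function of `(r_y, w_y)`. -/
noncomputable def branchWeight (r w : ℕ) : ℚ :=
  2 * (1 - 1 / (r : ℚ)) + w

lemma branchWeight_zero (w : ℕ) : branchWeight 0 w = 2 + w := by
  simp [branchWeight]

lemma branchWeight_one (w : ℕ) : branchWeight 1 w = w := by
  simp [branchWeight]

lemma one_add_le_branchWeight {r : ℕ} (hr : 2 ≤ r) (w : ℕ) : 1 + (w : ℚ) ≤ branchWeight r w := by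
  have hr' : (2 : ℚ) ≤ r := by exact_mod_cast hr
  have : 1 / (r : ℚ) ≤ 1 / 2 := one_div_le_one_div_of_le two_pos hr'
  unfold branchWeight
  linarith

lemma branchWeight_nonneg (r w : ℕ) : 0 ≤ branchWeight r w := by
  rcases r with _ | _ | r
  · rw [branchWeight_zero]; positivity
  · rw [branchWeight_one]; positivity
  · exact le_trans (by positivity) (one_add_le_branchWeight (by omega) w)

lemma one_le_branchWeight {r w : ℕ} (h : 0 < branchWeight r w) : 1 ≤ branchWeight r w := by
  rcases r with _ | _ | r
  · rw [branchWeight_zero]; linarith [(w.cast_nonneg : (0 : ℚ) ≤ w)]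
  · rw [branchWeight_one] at h ⊢
    exact Nat.one_le_cast.mpr (Nat.cast_pos.mp h)
  · exact le_trans (by simp) (one_add_le_branchWeight (by omega) w)

lemma branchWeight_cases {r w : ℕ} (h0 : 0 < branchWeight r w) (h2 : branchWeight r w < 2) :
    (2 ≤ r ∧ w = 0) ∨ (r = 1 ∧ w = 1) := by
  rcases r with _ | _ | r
  · rw [branchWeight_zero] at h2; linarith [(w.cast_nonneg : (0 : ℚ) ≤ w)]
  · rw [branchWeight_one] at h0 h2
    have : 0 < w := by exact_mod_cast h0
    have : w < 2 := by exact_mod_cast h2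
    right; omega
  · have := one_add_le_branchWeight (by omega : 2 ≤ r + 2) w
    have : w < 1 := by exact_mod_cast (by linarith : (w : ℚ) < 1)
    left; omega

lemma existsUnique_pos_of_finsum_lt_two {α R : Type*} [Finite α] [Semiring R] [PartialOrder R]
    [IsOrderedRing R] {f : α → R} (hf : 0 ≤ f) (hf1 : ∀ a, 0 < f a → 1 ≤ f a)
    (h0 : 0 < ∑ᶠ a, f a) (h2 : ∑ᶠ a, f a < 2) : ∃! a, 0 < f a := by
  have : Fintype α := Fintype.ofFinite α
  rw [finsum_eq_sum_of_fintype] at h0 h2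
  obtain ⟨a, ha⟩ : ∃ a, 0 < f a := by
    by_contra! h
    have : ∑ a, f a = 0 := Finset.sum_eq_zero fun a _ => ((hf a).eq_of_not_lt (h a)).symm
    exact h0.ne' this
  refine ⟨a, ha, fun b hb => ?_⟩
  by_contra hba
  have hpair : f b + f a ≤ ∑ a, f a := by
    simpa [Finset.sum_pair hba] using
      Finset.sum_le_sum_of_subset_of_nonneg (Finset.subset_univ {b, a}) fun i _ _ => hf i
  have htwo : 2 ≤ f b + f a := one_add_one_eq_two (R := R) ▸ add_le_add (hf1 b hb) (hf1 a ha)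
  exact not_lt_of_ge (htwo.trans hpair) h2

theorem branch_of_ram_lt_two_general {Γ : Type} [Group Γ] {G : Multigraph} (A : GraphAction Γ G)
    (h0 : 0 < A.ram ⊤) (h2 : A.ram ⊤ < 2) :
    (∃! y : A.quotV ⊤, A.IsBranch ⊤ y) ∧
    ∀ y : A.quotV ⊤, A.IsBranch ⊤ y →
      (2 ≤ A.r ⊤ y ∧ A.w ⊤ y = 0) ∨ (A.r ⊤ y = 1 ∧ A.w ⊤ y = 1) := by
  have hnonneg : ∀ y, 0 ≤ branchWeight (A.r ⊤ y) (A.w ⊤ y) := fun y => branchWeight_nonneg _ _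
  refine ⟨existsUnique_pos_of_finsum_lt_two hnonneg (fun _ => one_le_branchWeight) h0 h2,
    fun y hy => branchWeight_cases hy ?_⟩
  exact (single_le_finsum y (Set.toFinite _) hnonneg).trans_lt h2

/-- If `Γ` acts harmonically on `G` with `0 < R < 2`, then there is a
single branch point `y`, and either `r_y ≥ 2` and `w_y = 0`, or `r_y = w_y = 1`. -/
theorem branch_of_ram_lt_two {Γ : Type} [Group Γ] {G : Multigraph} (A : GraphAction Γ G)
    (hA : A.ActsHarmonically) (h0 : 0 < A.ram ⊤) (h2 : A.ram ⊤ < 2) :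
    (∃! y : A.quotV ⊤, A.IsBranch ⊤ y) ∧
    ∀ y : A.quotV ⊤, A.IsBranch ⊤ y →
      (2 ≤ A.r ⊤ y ∧ A.w ⊤ y = 0) ∨ (A.r ⊤ y = 1 ∧ A.w ⊤ y = 1) :=
  branch_of_ram_lt_two_general A h0 h2
end

section
/- Suppose a group Γ acts harmonically on a graph G with ramification number R > 2. Then R ≥ 7/3, and R = 7/3 occurs in exactly three ways: (i) a single branch point with r = 3 and w = 1; (ii) two branch points with (r₁, r₂; w₁, w₂) = (3, 2; 0, 0); (iii) two branch points with (r₁, r₂; w₁, w₂) = (3, 1; 0, 1) (up to reordering of the branch points). -/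
open scoped Classical

/-!
Every vertex of the quotient contributes `2 (1 - 1/r) + w` to `R`, with `r` and `w` natural
numbers, and these contributions lie in `{0, 1, 4/3} ∪ [3/2, 2] ∪ {7/3} ∪ [5/2, ∞)`.
Branch points contribute at least `1`, so `R < 3` leaves room for at most two of them. With
one branch point, `R > 2` forces its contribution to be at least `7/3`; with two, not both
contribute exactly `1`, so `R ≥ 4/3 + 1`. Equality pins down the contributions, namely `7/3`
(only `r = 3, w = 1`), or `4/3` (only `r = 3, w = 0`) and `1` (only `(2, 0)` and `(1, 1)`).
-/

open Finset

def ramContribution (r w : ℕ) : ℚ := 2 * (1 - 1 / (r : ℚ)) + w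

-- The case `r = 0`, where `1 / 0 = 0` makes the contribution `2 + w`, is covered as well.
lemma ramContribution_cases (r w : ℕ) :
    ramContribution r w = 0 ∨
    (ramContribution r w = 1 ∧ (r = 2 ∧ w = 0 ∨ r = 1 ∧ w = 1)) ∨
    (ramContribution r w = 4 / 3 ∧ r = 3 ∧ w = 0) ∨
    (3 / 2 ≤ ramContribution r w ∧ ramContribution r w ≤ 2) ∨
    (ramContribution r w = 7 / 3 ∧ r = 3 ∧ w = 1) ∨
    5 / 2 ≤ ramContribution r w := by
  unfold ramContribution
  have hr_inv : 1 / (r : ℚ) ≤ 1 := by simpa using Nat.cast_inv_le_one (α := ℚ) r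
  by_cases hw : 3 ≤ w
  · have : (3 : ℚ) ≤ w := by exact_mod_cast hw
    right; right; right; right; right
    linarith
  by_cases hr : 4 ≤ r
  · have : 1 / (r : ℚ) ≤ 1 / 4 := by gcongr; exact_mod_cast hr
    have : 0 < 1 / (r : ℚ) := by positivity
    interval_cases w
    · right; right; right; left; constructor <;> push_cast <;> linarith
    all_goals right; right; right; right; right; push_cast; linarith
  · interval_cases r <;> interval_cases w <;> norm_num

section ramContribution

variable {r w : ℕ}

lemma ramContribution_nonneg : 0 ≤ ramContribution r w := by
  rcases ramContribution_cases r w with hc | ⟨hc, -⟩ | ⟨hc, -⟩ | ⟨hc, hc'⟩ | ⟨hc, -⟩ | hc <;>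
    linarith

lemma one_le_ramContribution (h : 0 < ramContribution r w) : 1 ≤ ramContribution r w := by
  rcases ramContribution_cases r w with hc | ⟨hc, -⟩ | ⟨hc, -⟩ | ⟨hc, hc'⟩ | ⟨hc, -⟩ | hc <;>
    linarith

lemma four_thirds_le_ramContribution (h : 1 < ramContribution r w) :
    4 / 3 ≤ ramContribution r w := by
  rcases ramContribution_cases r w with hc | ⟨hc, -⟩ | ⟨hc, -⟩ | ⟨hc, hc'⟩ | ⟨hc, -⟩ | hc <;>
    linarith

lemma seven_thirds_le_ramContribution (h : 2 < ramContribution r w) :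
    7 / 3 ≤ ramContribution r w := by
  rcases ramContribution_cases r w with hc | ⟨hc, -⟩ | ⟨hc, -⟩ | ⟨hc, hc'⟩ | ⟨hc, -⟩ | hc <;>
    linarith

lemma ramContribution_eq_one_iff :
    ramContribution r w = 1 ↔ r = 2 ∧ w = 0 ∨ r = 1 ∧ w = 1 := by
  refine ⟨fun h => ?_, ?_⟩
  · rcases ramContribution_cases r w with hc | ⟨-, hrw⟩ | ⟨hc, -⟩ | ⟨hc, hc'⟩ | ⟨hc, -⟩ | hc
    all_goals first | exact hrw | (exfalso; linarith)
  · rintro (⟨rfl, rfl⟩ | ⟨rfl, rfl⟩) <;> norm_num [ramContribution]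

lemma ramContribution_eq_four_thirds_iff : ramContribution r w = 4 / 3 ↔ r = 3 ∧ w = 0 := by
  refine ⟨fun h => ?_, ?_⟩
  · rcases ramContribution_cases r w with hc | ⟨hc, -⟩ | ⟨-, hrw⟩ | ⟨hc, hc'⟩ | ⟨hc, -⟩ | hc
    all_goals first | exact hrw | (exfalso; linarith)
  · rintro ⟨rfl, rfl⟩; norm_num [ramContribution]

lemma ramContribution_eq_seven_thirds_iff : ramContribution r w = 7 / 3 ↔ r = 3 ∧ w = 1 := by
  refine ⟨fun h => ?_, ?_⟩
  · rcases ramContribution_cases r w with hc | ⟨hc, -⟩ | ⟨hc, -⟩ | ⟨hc, hc'⟩ | ⟨-, hrw⟩ | hc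
    all_goals first | exact hrw | (exfalso; linarith)
  · rintro ⟨rfl, rfl⟩; norm_num [ramContribution]

end ramContribution

section SumGap

variable {α : Type*} {s : Finset α} {f : α → ℚ}

lemma eq_singleton_or_eq_pair_of_sum_lt_three [DecidableEq α] (h1 : ∀ y ∈ s, 1 ≤ f y)
    (hpos : 0 < ∑ y ∈ s, f y) (hlt : ∑ y ∈ s, f y < 3) :
    (∃ a, s = {a}) ∨ ∃ a b, a ≠ b ∧ s = {a, b} := by
  have hcard : (#s : ℚ) ≤ ∑ y ∈ s, f y := by simpa using s.card_nsmul_le_sum f 1 h1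
  have hne : s.Nonempty := nonempty_of_sum_ne_zero hpos.ne'
  have : #s < 3 := by exact_mod_cast hcard.trans_lt hlt
  obtain hs | hs : #s = 1 ∨ #s = 2 := by have := hne.card_pos; omega
  · exact .inl (card_eq_one.1 hs)
  · exact .inr (card_eq_two.1 hs)

lemma seven_thirds_le_sum (h1 : ∀ y ∈ s, 1 ≤ f y) (h43 : ∀ y ∈ s, 1 < f y → 4 / 3 ≤ f y)
    (h73 : ∀ y ∈ s, 2 < f y → 7 / 3 ≤ f y) (h2 : 2 < ∑ y ∈ s, f y) :
    7 / 3 ≤ ∑ y ∈ s, f y := by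
  classical
  by_contra! hlt
  obtain ⟨a, rfl⟩ | ⟨a, b, hab, rfl⟩ :=
    eq_singleton_or_eq_pair_of_sum_lt_three h1 (by linarith) (by linarith)
  · simp only [sum_singleton] at h2 hlt
    linarith [h73 a (mem_singleton_self a) h2]
  · simp only [mem_insert, mem_singleton, forall_eq_or_imp, forall_eq] at h1 h43
    rw [sum_pair hab] at h2 hlt
    rcases lt_or_ge 1 (f a) with ha | ha
    · linarith [h43.1 ha]
    · linarith [h43.2 (by linarith)]

lemma sum_eq_seven_thirds_iff [DecidableEq α] (h1 : ∀ y ∈ s, 1 ≤ f y)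
    (h43 : ∀ y ∈ s, 1 < f y → 4 / 3 ≤ f y) :
    ∑ y ∈ s, f y = 7 / 3 ↔
      (∃ a, s = {a} ∧ f a = 7 / 3) ∨ ∃ a b, a ≠ b ∧ s = {a, b} ∧ f a = 4 / 3 ∧ f b = 1 := by
  refine ⟨fun h => ?_, ?_⟩
  · obtain ⟨a, rfl⟩ | ⟨a, b, hab, rfl⟩ :=
      eq_singleton_or_eq_pair_of_sum_lt_three h1 (by linarith) (by linarith)
    · exact .inl ⟨a, rfl, by simpa using h⟩
    · simp only [mem_insert, mem_singleton, forall_eq_or_imp, forall_eq] at h1 h43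
      rw [sum_pair hab] at h
      rcases lt_or_ge 1 (f a) with ha | ha
      · have := h43.1 ha
        exact .inr ⟨a, b, hab, rfl, by linarith, by linarith⟩
      · have := h43.2 (by linarith)
        exact .inr ⟨b, a, hab.symm, pair_comm a b, by linarith, by linarith⟩
  · rintro (⟨a, rfl, ha⟩ | ⟨a, b, hab, rfl, ha, hb⟩)
    · simpa using ha
    · rw [sum_pair hab, ha, hb]; norm_num

end SumGap

namespace GraphAction

variable {Γ : Type} [Group Γ] {G : Multigraph} {A : GraphAction Γ G} {Δ : Subgroup Γ}

noncomputable def branchPoints (A : GraphAction Γ G) (Δ : Subgroup Γ) : Finset (A.quotV Δ) :=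
  {y | A.IsBranch Δ y}

lemma mem_branchPoints {y : A.quotV Δ} : y ∈ A.branchPoints Δ ↔ A.IsBranch Δ y := by
  simp [branchPoints]

lemma ram_eq_sum_branchPoints (A : GraphAction Γ G) (Δ : Subgroup Γ) :
    A.ram Δ = ∑ y ∈ A.branchPoints Δ, ramContribution (A.r Δ y) (A.w Δ y) :=
  finsum_eq_sum_of_support_subset _ fun _ hy =>
    mem_branchPoints.2 (ramContribution_nonneg.lt_of_ne' hy)

lemma exists_branchPoints_eq_singleton_iff {P : A.quotV Δ → Prop} :
    (∃ a, A.branchPoints Δ = {a} ∧ P a) ↔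
      (∃! y, A.IsBranch Δ y) ∧ ∀ y, A.IsBranch Δ y → P y := by
  simp only [eq_singleton_iff_unique_mem, mem_branchPoints]
  constructor
  · rintro ⟨a, ⟨ha, huniq⟩, hPa⟩
    exact ⟨⟨a, ha, huniq⟩, fun y hy => huniq y hy ▸ hPa⟩
  · rintro ⟨⟨a, ha, huniq⟩, hP⟩
    exact ⟨a, ⟨ha, huniq⟩, hP a ha⟩

lemma branchPoints_eq_pair_iff {a b : A.quotV Δ} :
    A.branchPoints Δ = {a, b} ↔
      A.IsBranch Δ a ∧ A.IsBranch Δ b ∧ ∀ y, A.IsBranch Δ y → y = a ∨ y = b := by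
  simp only [Finset.ext_iff, mem_branchPoints, mem_insert, mem_singleton]
  constructor
  · intro h
    exact ⟨(h a).2 (.inl rfl), (h b).2 (.inr rfl), fun y => (h y).1⟩
  · rintro ⟨ha, hb, h⟩ y
    exact ⟨h y, by rintro (rfl | rfl) <;> assumption⟩

end GraphAction

theorem ram_gt_two_general {Γ : Type} [Group Γ] {G : Multigraph} (A : GraphAction Γ G)
    (hR : 2 < A.ram ⊤) :
    (7/3 : ℚ) ≤ A.ram ⊤ ∧
    (A.ram ⊤ = 7/3 ↔
      (((∃! y : A.quotV ⊤, A.IsBranch ⊤ y) ∧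
        ∀ y : A.quotV ⊤, A.IsBranch ⊤ y → A.r ⊤ y = 3 ∧ A.w ⊤ y = 1) ∨
      (∃ y₁ y₂ : A.quotV ⊤, y₁ ≠ y₂ ∧ A.IsBranch ⊤ y₁ ∧ A.IsBranch ⊤ y₂ ∧
        (∀ y : A.quotV ⊤, A.IsBranch ⊤ y → y = y₁ ∨ y = y₂) ∧
        A.r ⊤ y₁ = 3 ∧ A.r ⊤ y₂ = 2 ∧ A.w ⊤ y₁ = 0 ∧ A.w ⊤ y₂ = 0) ∨
      (∃ y₁ y₂ : A.quotV ⊤, y₁ ≠ y₂ ∧ A.IsBranch ⊤ y₁ ∧ A.IsBranch ⊤ y₂ ∧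
        (∀ y : A.quotV ⊤, A.IsBranch ⊤ y → y = y₁ ∨ y = y₂) ∧
        A.r ⊤ y₁ = 3 ∧ A.r ⊤ y₂ = 1 ∧ A.w ⊤ y₁ = 0 ∧ A.w ⊤ y₂ = 1))) := by
  have h1 := fun y (hy : y ∈ A.branchPoints ⊤) =>
    one_le_ramContribution (GraphAction.mem_branchPoints.1 hy)
  rw [A.ram_eq_sum_branchPoints ⊤] at hR ⊢
  refine ⟨seven_thirds_le_sum h1 (fun _ _ => four_thirds_le_ramContribution)
    (fun _ _ => seven_thirds_le_ramContribution) hR, ?_⟩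
  rw [sum_eq_seven_thirds_iff h1 fun _ _ => four_thirds_le_ramContribution,
    GraphAction.exists_branchPoints_eq_singleton_iff]
  simp only [ramContribution_eq_seven_thirds_iff, ramContribution_eq_four_thirds_iff,
    ramContribution_eq_one_iff, GraphAction.branchPoints_eq_pair_iff]
  refine or_congr_right ⟨?_, ?_⟩
  · rintro ⟨a, b, hab, ⟨ha, hb, hall⟩, ⟨hra, hwa⟩, ⟨hrb, hwb⟩ | ⟨hrb, hwb⟩⟩
    exacts [.inl ⟨a, b, hab, ha, hb, hall, hra, hrb, hwa, hwb⟩,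
      .inr ⟨a, b, hab, ha, hb, hall, hra, hrb, hwa, hwb⟩]
  · rintro (⟨a, b, hab, ha, hb, hall, hra, hrb, hwa, hwb⟩ |
      ⟨a, b, hab, ha, hb, hall, hra, hrb, hwa, hwb⟩)
    exacts [⟨a, b, hab, ⟨ha, hb, hall⟩, ⟨hra, hwa⟩, .inl ⟨hrb, hwb⟩⟩,
      ⟨a, b, hab, ⟨ha, hb, hall⟩, ⟨hra, hwa⟩, .inr ⟨hrb, hwb⟩⟩]

/-- If `Γ` acts harmonically on `G` with `R > 2`, then `R ≥ 7/3`, and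
`R = 7/3` occurs in exactly three ways: a single branch point with `r = 3, w = 1`; two
branch points with vector `(3,2;0,0)`; or two branch points with vector `(3,1;0,1)`
(up to reordering). -/
theorem ram_gt_two {Γ : Type} [Group Γ] {G : Multigraph} (A : GraphAction Γ G)
    (hA : A.ActsHarmonically) (hR : 2 < A.ram ⊤) :
    (7/3 : ℚ) ≤ A.ram ⊤ ∧
    (A.ram ⊤ = 7/3 ↔
      (((∃! y : A.quotV ⊤, A.IsBranch ⊤ y) ∧
        ∀ y : A.quotV ⊤, A.IsBranch ⊤ y → A.r ⊤ y = 3 ∧ A.w ⊤ y = 1) ∨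
      (∃ y₁ y₂ : A.quotV ⊤, y₁ ≠ y₂ ∧ A.IsBranch ⊤ y₁ ∧ A.IsBranch ⊤ y₂ ∧
        (∀ y : A.quotV ⊤, A.IsBranch ⊤ y → y = y₁ ∨ y = y₂) ∧
        A.r ⊤ y₁ = 3 ∧ A.r ⊤ y₂ = 2 ∧ A.w ⊤ y₁ = 0 ∧ A.w ⊤ y₂ = 0) ∨
      (∃ y₁ y₂ : A.quotV ⊤, y₁ ≠ y₂ ∧ A.IsBranch ⊤ y₁ ∧ A.IsBranch ⊤ y₂ ∧
        (∀ y : A.quotV ⊤, A.IsBranch ⊤ y → y = y₁ ∨ y = y₂) ∧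
        A.r ⊤ y₁ = 3 ∧ A.r ⊤ y₂ = 1 ∧ A.w ⊤ y₁ = 0 ∧ A.w ⊤ y₂ = 1))) :=
  ram_gt_two_general A hR
end
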